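/- The Farey graph is not a minor of T_{ℵ0} * t. -/

import Mathlib

open SimpleGraph

universe u v

/-! ### Basic connectivity notions -/

/-- The edge set `F` separates `a` from `b` in `G`: every `a`–`b` walk uses an edge of `F`. -/
def EdgeSeparates {V : Type u} (G : SimpleGraph V) (F : Set (Sym2 V)) (a b : V) : Prop :=
  ∀ p : G.Walk a b, ∃ e ∈ p.edges, e ∈ F

/-- `a` and `b` are finitely separable in `G`: some finite edge set separates them. -/
def FinSep {V : Type u} (G : SimpleGraph V) (a b : V) : Prop :=
  ∃ F : Set (Sym2 V), F.Finite ∧ EdgeSeparates G F a b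

/-- `G` is infinitely edge-connected: it has at least two vertices and no finite set of
edges separates any two distinct vertices. -/
def InfEdgeConnected {V : Type u} (G : SimpleGraph V) : Prop :=
  Nontrivial V ∧ ∀ a b : V, a ≠ b → ¬ FinSep G a b

/-- The vertex set `S` separates `a` from `b`: `a, b ∉ S` and every `a`–`b` walk meets `S`. -/
def VSeparates {V : Type u} (G : SimpleGraph V) (S : Set V) (a b : V) : Prop :=
  a ∉ S ∧ b ∉ S ∧ ∀ p : G.Walk a b, ∃ z ∈ p.support, z ∈ S

/-! ### Minors -/

/-- `br` is a minor model of `H` in `G`: the branch sets `br w` are nonempty, pairwise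
disjoint, connected in `G`, and edges of `H` are witnessed by `G`-edges between branch sets. -/
def IsMinorModel {V : Type u} {W : Type v} (G : SimpleGraph V) (H : SimpleGraph W)
    (br : W → Set V) : Prop :=
  (∀ w, (br w).Nonempty) ∧ (∀ w, (G.induce (br w)).Connected) ∧
    (∀ w w' : W, w ≠ w' → Disjoint (br w) (br w')) ∧
    (∀ w w' : W, H.Adj w w' → ∃ a ∈ br w, ∃ b ∈ br w', G.Adj a b)

/-- `H` is a minor of `G`. -/
def HasMinor {V : Type u} {W : Type v} (G : SimpleGraph V) (H : SimpleGraph W) : Prop :=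
  ∃ br : W → Set V, IsMinorModel G H br

/-- `G` and `H` are minor-equivalent: each is a minor of the other. -/
def MinorEquiv {V : Type u} {W : Type v} (G : SimpleGraph V) (H : SimpleGraph W) : Prop :=
  HasMinor G H ∧ HasMinor H G

/-- `H` is a topological minor of `G`: there are branch vertices (given by the injection `f`)
and internally disjoint paths in `G` joining them, one for each edge of `H`, together forming
a subdivision of `H` inside `G`. -/
def IsTopMinor {V : Type u} {W : Type v} (G : SimpleGraph V) (H : SimpleGraph W) : Prop :=
  ∃ f : W → V, Function.Injective f ∧
    ∃ p : ∀ ⦃x y : W⦄, H.Adj x y → G.Walk (f x) (f y),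
      (∀ ⦃x y : W⦄ (h : H.Adj x y), (p h).IsPath) ∧
      (∀ ⦃x y : W⦄ (h : H.Adj x y), ∀ w : W, f w ∈ (p h).support → w = x ∨ w = y) ∧
      (∀ ⦃x y x' y' : W⦄ (h : H.Adj x y) (h' : H.Adj x' y'), s(x, y) ≠ s(x', y') →
        ∀ z : V, z ∈ (p h).support → z ∈ (p h').support →
          (z = f x ∨ z = f y) ∧ (z = f x' ∨ z = f y'))

/-! ### The Farey graph, the halved Farey graph, `T_ℵ₀ * t` and the binary tree -/

/-- The Farey graph, on vertex set `ℚ ∪ {∞}` (with `none` playing the role of `∞ = 1/0`):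
two rationals `a/b` and `c/d` in lowest terms are adjacent iff `ad - cb = ±1`. -/
def fareyGraph : SimpleGraph (Option ℚ) where
  Adj x y :=
    match x, y with
    | some q, some r => (q.num * (r.den : ℤ) - r.num * (q.den : ℤ)).natAbs = 1
    | some q, none => q.den = 1
    | none, some r => r.den = 1
    | none, none => False
  symm := by
    refine ⟨?_⟩
    rintro (_ | q) (_ | r) h
    · exact h
    · exact h
    · exact h
    · simp only at h ⊢
      rw [← neg_sub, Int.natAbs_neg] at h
      exact h
  loopless := by
    refine ⟨?_⟩
    rintro (_ | q) h
    · exact h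
    · simp at h

/-- The `ℵ₀`-regular tree, realised on finite sequences of naturals, a vertex being
adjacent precisely to its parent and to its infinitely many children. -/
def TAleph0 : SimpleGraph (List ℕ) where
  Adj x y := (∃ n, x = n :: y) ∨ (∃ n, y = n :: x)
  symm := by
    refine ⟨?_⟩
    rintro x y (h | h)
    · exact Or.inr h
    · exact Or.inl h
  loopless := by
    refine ⟨?_⟩
    rintro x (⟨n, h⟩ | ⟨n, h⟩) <;> exact List.cons_ne_self n x h.symm

/-- The graph `T_ℵ₀ * t`: the `ℵ₀`-regular tree together with one additional vertex
(`none`) joined to all of its vertices. -/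
def TAleph0Star : SimpleGraph (Option (List ℕ)) where
  Adj x y :=
    match x, y with
    | none, none => False
    | none, some _ => True
    | some _, none => True
    | some a, some b => TAleph0.Adj a b
  symm := by
    refine ⟨?_⟩
    rintro (_ | a) (_ | b) h
    · exact h
    · trivial
    · trivial
    · exact TAleph0.symm.symm _ _ h
  loopless := by
    refine ⟨?_⟩
    rintro (_ | a) h
    · exact h
    · exact TAleph0.loopless.irrefl a h

/-- The infinite binary tree, realised on finite sequences of booleans, a vertex being
adjacent precisely to its parent and to its two children. -/
def binaryTree : SimpleGraph (List Bool) where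
  Adj x y := (∃ b, x = b :: y) ∨ (∃ b, y = b :: x)
  symm := by
    refine ⟨?_⟩
    rintro x y (h | h)
    · exact Or.inr h
    · exact Or.inl h
  loopless := by
    refine ⟨?_⟩
    rintro x (⟨b, h⟩ | ⟨b, h⟩) <;> exact List.cons_ne_self b x h.symm

/-- The two original endvertices of the blue edge to which the vertex recursively created
for a binary string was joined when it was created.  The two initial vertices of `F̌₀` are
`Sum.inl true` and `Sum.inl false`; the vertex created for the string `s` is `Sum.inr s`,
its two children being `false :: s` and `true :: s`. -/
def hfEnds : List Bool → (Bool ⊕ List Bool) × (Bool ⊕ List Bool)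
  | [] => (Sum.inl true, Sum.inl false)
  | (false :: s) => (Sum.inr s, (hfEnds s).1)
  | (true :: s) => (Sum.inr s, (hfEnds s).2)

/-- The halved Farey graph `F̌ = ⋃ₙ F̌ₙ`. -/
def halvedFareyGraph : SimpleGraph (Bool ⊕ List Bool) where
  Adj x y := x ≠ y ∧
    ((x = Sum.inl true ∧ y = Sum.inl false) ∨ (y = Sum.inl true ∧ x = Sum.inl false) ∨
      (∃ s, x = Sum.inr s ∧ (y = (hfEnds s).1 ∨ y = (hfEnds s).2)) ∨
      (∃ s, y = Sum.inr s ∧ (x = (hfEnds s).1 ∨ x = (hfEnds s).2)))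
  symm := by
    refine ⟨?_⟩
    rintro x y ⟨hne, h⟩
    refine ⟨hne.symm, ?_⟩
    rcases h with h | h | h | h
    · exact Or.inr (Or.inl h)
    · exact Or.inl h
    · exact Or.inr (Or.inr (Or.inr h))
    · exact Or.inr (Or.inr (Or.inl h))
  loopless := by refine ⟨?_⟩; rintro x ⟨hne, -⟩; exact hne rfl

/-! ### Spanning trees, bonds and separations -/

/-- The fundamental cut of the edge `ab` of a spanning tree `T` of `G`: the set of edges
of `G` joining the two components of `T - ab`. -/
def FundCut {V : Type u} (G T : SimpleGraph V) (a b : V) : Set (Sym2 V) :=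
  {e | e ∈ G.edgeSet ∧ ∃ x y : V, e = s(x, y) ∧
    (T.deleteEdges {s(a, b)}).Reachable a x ∧ (T.deleteEdges {s(a, b)}).Reachable b y}

/-- `T` is a finitely separating spanning tree of `G`: a spanning tree all of whose
fundamental cuts are finite. -/
def IsFinSepSpanningTree {V : Type u} (G T : SimpleGraph V) : Prop :=
  T ≤ G ∧ T.IsTree ∧ ∀ a b : V, T.Adj a b → (FundCut G T a b).Finite

/-- The set of edges of `G` between the vertex sets `A` and `B`. -/
def cutEdgesBetween {V : Type u} (G : SimpleGraph V) (A B : Set V) : Set (Sym2 V) :=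
  {e | ∃ a ∈ A, ∃ b ∈ B, G.Adj a b ∧ e = s(a, b)}

/-- `(A, B)` is an orientation of an element of `B_ℵ₀(G)`: a bipartition of `V(G)` whose
cut is a finite bond, i.e. is nonempty and finite with both sides connected. -/
def IsFinBondOrientation {V : Type u} (G : SimpleGraph V) (A B : Set V) : Prop :=
  A ∪ B = Set.univ ∧ Disjoint A B ∧
    (cutEdgesBetween G A B).Nonempty ∧ (cutEdgesBetween G A B).Finite ∧
    (G.induce A).Connected ∧ (G.induce B).Connected

/-! ### The quotient graph `G̃` by finite inseparability -/

/-- The class of all vertices not finitely separable from `x`. -/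
def ncls {V : Type u} (G : SimpleGraph V) (x : V) : Set V := {y | ¬ FinSep G x y}

/-- The vertex classes of `G̃`. -/
def ClassOf {V : Type u} (G : SimpleGraph V) : Type u := {X : Set V // ∃ x, X = ncls G x}

/-- The quotient graph `G̃` on the classes of pairwise not finitely separable vertices;
two distinct classes are adjacent iff `G` has an edge between them. -/
def tildeGraph {V : Type u} (G : SimpleGraph V) : SimpleGraph (ClassOf G) where
  Adj X Y := X ≠ Y ∧ ∃ a ∈ X.1, ∃ b ∈ Y.1, G.Adj a b
  symm := by
    refine ⟨?_⟩
    rintro X Y ⟨hne, a, ha, b, hb, hab⟩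
    exact ⟨hne.symm, b, hb, a, ha, hab.symm⟩
  loopless := by refine ⟨?_⟩; rintro X ⟨hne, -⟩; exact hne rfl

/-- `C` is (the vertex set of) a connected component of `G - u - v`. -/
def IsCompOf {V : Type u} (G : SimpleGraph V) (u v : V) (C : Set V) : Prop :=
  u ∉ C ∧ v ∉ C ∧ (G.induce C).Connected ∧
    ∀ x, x ∉ C → x ≠ u → x ≠ v → ∀ c ∈ C, ¬ G.Adj c x

/-! ### Arrows, footballs, muscles and plows -/

/-- `A` is an arrow from `u` to `v`: it arises from `u` and `v` by disjointly adding an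
infinitely edge-connected payload `H` (here: everything except `u` and `v`), adding a
single `u`–`H` edge `u h`, and adding infinitely many `v`–`(H - h)` edges. -/
def IsArrow {W : Type u} (A : SimpleGraph W) (u v : W) : Prop :=
  u ≠ v ∧
    ∃ h : W, h ≠ u ∧ h ≠ v ∧
      (∀ w, A.Adj u w ↔ w = h) ∧
      {w | A.Adj v w}.Infinite ∧
      (∀ w, A.Adj v w → w ≠ u ∧ w ≠ h) ∧
      InfEdgeConnected (A.induce {w | w ≠ u ∧ w ≠ v})

/-- `B` is an arrow barrage from `u` to `v`: a union of countably infinitely many arrows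
from `u` to `v` which pairwise meet precisely in `u` and `v`. -/
def IsArrowBarrage {W : Type u} (B : SimpleGraph W) (u v : W) : Prop :=
  u ≠ v ∧ ¬ B.Adj u v ∧
    ∃ P : ℕ → Set W,
      (∀ n, u ∉ P n ∧ v ∉ P n) ∧
      (∀ n m, n ≠ m → Disjoint (P n) (P m)) ∧
      (∀ w : W, w ≠ u → w ≠ v → ∃ n, w ∈ P n) ∧
      (∀ n m, n ≠ m → ∀ a ∈ P n, ∀ b ∈ P m, ¬ B.Adj a b) ∧
      (∀ n, IsArrow (B.induce (P n ∪ {u, v}))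
        ⟨u, by simp⟩ ⟨v, by simp⟩)

/-- `G` contains an arrow barrage minor from `x` to `y`: the branch set of the nock
contains `x` and the branch set of the head contains `y`. -/
def HasArrowBarrageMinorFromTo {V : Type u} (G : SimpleGraph V) (x y : V) : Prop :=
  ∃ (W : Type u) (B : SimpleGraph W) (n h : W) (br : W → Set V),
    IsArrowBarrage B n h ∧ IsMinorModel G B br ∧ x ∈ br n ∧ y ∈ br h

/-- `F` is a football with endvertices `u` and `v`: `F` is infinitely edge-connected and
so is `F - u - v`. -/
def IsFootball {W : Type u} (F : SimpleGraph W) (u v : W) : Prop :=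
  u ≠ v ∧ InfEdgeConnected F ∧ InfEdgeConnected (F.induce {w | w ≠ u ∧ w ≠ v})

/-- `G` contains a football minor connecting `x` and `y`. -/
def HasFootballMinorConnecting {V : Type u} (G : SimpleGraph V) (x y : V) : Prop :=
  ∃ (W : Type u) (F : SimpleGraph W) (u v : W) (br : W → Set V),
    IsFootball F u v ∧ IsMinorModel G F br ∧
      ((x ∈ br u ∧ y ∈ br v) ∨ (x ∈ br v ∧ y ∈ br u))

/-- `M` is a muscle with endvertices `u` and `v`: it arises from `u` and `v` by disjointly
adding an infinitely edge-connected graph `H` (everything except `u` and `v`) and adding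
one `u`–`H` edge `u x` and one `v`–`H` edge `v y` with `x ≠ y`. -/
def IsMuscle {W : Type u} (M : SimpleGraph W) (u v : W) : Prop :=
  u ≠ v ∧
    ∃ x y : W, x ≠ u ∧ x ≠ v ∧ y ≠ u ∧ y ≠ v ∧ x ≠ y ∧
      (∀ w, M.Adj u w ↔ w = x) ∧ (∀ w, M.Adj v w ↔ w = y) ∧
      InfEdgeConnected (M.induce {w | w ≠ u ∧ w ≠ v})

/-- `B` is a muscle barrage with endvertices `u` and `v`. -/
def IsMuscleBarrage {W : Type u} (B : SimpleGraph W) (u v : W) : Prop :=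
  u ≠ v ∧ ¬ B.Adj u v ∧
    ∃ P : ℕ → Set W,
      (∀ n, u ∉ P n ∧ v ∉ P n) ∧
      (∀ n m, n ≠ m → Disjoint (P n) (P m)) ∧
      (∀ w : W, w ≠ u → w ≠ v → ∃ n, w ∈ P n) ∧
      (∀ n m, n ≠ m → ∀ a ∈ P n, ∀ b ∈ P m, ¬ B.Adj a b) ∧
      (∀ n, IsMuscle (B.induce (P n ∪ {u, v}))
        ⟨u, by simp⟩ ⟨v, by simp⟩)

/-- `G` contains a muscle barrage minor connecting `x` and `y`. -/
def HasMuscleBarrageMinorConnecting {V : Type u} (G : SimpleGraph V) (x y : V) : Prop :=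
  ∃ (W : Type u) (B : SimpleGraph W) (u v : W) (br : W → Set V),
    IsMuscleBarrage B u v ∧ IsMinorModel G B br ∧
      ((x ∈ br u ∧ y ∈ br v) ∨ (x ∈ br v ∧ y ∈ br u))

/-- `P` is a plow with endvertices `u`, `v` and head `h`: the union of two half-plows
(infinitely edge-connected graphs containing the edges `u h` resp. `h v`) meeting
precisely in `h`. -/
def IsPlow {W : Type u} (P : SimpleGraph W) (u v h : W) : Prop :=
  u ≠ v ∧ u ≠ h ∧ v ≠ h ∧
    ∃ S T : Set W, S ∪ T = Set.univ ∧ S ∩ T = {h} ∧ u ∈ S ∧ v ∈ T ∧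
      (∀ a b : W, P.Adj a b → (a ∈ S ∧ b ∈ S) ∨ (a ∈ T ∧ b ∈ T)) ∧
      InfEdgeConnected (P.induce S) ∧ InfEdgeConnected (P.induce T) ∧
      P.Adj u h ∧ P.Adj h v

/-- `G` contains a plow minor connecting `x` and `y`. -/
def HasPlowMinorConnecting {V : Type u} (G : SimpleGraph V) (x y : V) : Prop :=
  ∃ (W : Type u) (P : SimpleGraph W) (u v h : W) (br : W → Set V),
    IsPlow P u v h ∧ IsMinorModel G P br ∧
      ((x ∈ br u ∧ y ∈ br v) ∨ (x ∈ br v ∧ y ∈ br u))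

/-! ### Recursive pruning -/

/-- One pruning step: remove from `S` all vertices whose up-closure within `S`
(w.r.t. the tree order `r`) is a chain. -/
def pruneStep {V : Type u} (r : V → V → Prop) (S : Set V) : Set V :=
  {t | t ∈ S ∧ ¬ IsChain r {s | s ∈ S ∧ r t s}}

/-- The set of vertices still unlabelled at stage `α` of the recursive pruning. -/
noncomputable def unlabelledAt {V : Type u} (r : V → V → Prop) : Ordinal.{u} → Set V :=
  WellFounded.fix Ordinal.lt_wf
    (fun α ih => {t | ∀ β, ∀ hβ : β < α, t ∈ pruneStep r (ih β hβ)})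

/-- The tree order `r` is recursively prunable: every vertex eventually gets labelled. -/
def RecursivelyPrunable {V : Type u} (r : V → V → Prop) : Prop :=
  ∃ α : Ordinal.{u}, unlabelledAt r α = ∅

/-- The tree order of the tree `T` rooted in `root`: `x ≤ y` iff `x` lies on the
(unique) `root`–`y` path of `T`. -/
def treeLE {V : Type u} (T : SimpleGraph V) (root : V) (x y : V) : Prop :=
  ∀ p : T.Walk root y, p.IsPath → x ∈ p.support

/-! ### Contracting a vertex set -/

/-- The graph `G[W]/X` obtained from the subgraph of `G` induced on `W` by contracting
the vertex set `X` to a single new vertex (`none`); the contracted vertex is adjacent to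
precisely those vertices of `W \ X` that send an edge to `X` in `G[W]`. -/
def contractIn {V : Type u} (G : SimpleGraph V) (W X : Set V) :
    SimpleGraph (Option ↥(W \ X)) where
  Adj a b :=
    match a, b with
    | some a, some b => G.Adj a.1 b.1
    | some a, none => ∃ x ∈ W ∩ X, G.Adj a.1 x
    | none, some b => ∃ x ∈ W ∩ X, G.Adj x b.1
    | none, none => False
  symm := by
    refine ⟨?_⟩
    rintro (_ | a) (_ | b) h
    · exact h
    · obtain ⟨x, hx, hadj⟩ := h
      exact ⟨x, hx, hadj.symm⟩
    · obtain ⟨x, hx, hadj⟩ := h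
      exact ⟨x, hx, hadj.symm⟩
    · exact h.symm
  loopless := by
    refine ⟨?_⟩
    rintro (_ | a) h
    · exact h
    · exact G.loopless.irrefl _ h

/-! ### Abstract graphs with vertex sets (as subgraphs of the complete ambient graph) -/

/-- A minor model of the abstract graph `H` in the abstract graph `G` (both given as
subgraphs of the complete graph on the ambient vertex type `U`). -/
def AbsMinorModel {U : Type u} (G H : (⊤ : SimpleGraph U).Subgraph) (br : U → Set U) : Prop :=
  (∀ h ∈ H.verts, br h ⊆ G.verts) ∧
    (∀ h ∈ H.verts, (G.induce (br h)).Connected) ∧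
    (∀ h ∈ H.verts, ∀ h' ∈ H.verts, h ≠ h' → Disjoint (br h) (br h')) ∧
    (∀ h h' : U, H.Adj h h' → ∃ a ∈ br h, ∃ b ∈ br h', G.Adj a b)

/-- A minor-map `φ = (D, f) : G ≽ H`: `D ⊆ V(G)`, `f` maps `D` onto `V(H)`, and the
fibres of `f` over the vertices of `H` form the branch sets of a minor model of `H` in `G`. -/
def AbsMinorMap {U : Type u} (G H : (⊤ : SimpleGraph U).Subgraph) (D : Set U) (f : U → U) :
    Prop :=
  D ⊆ G.verts ∧ (∀ x ∈ D, f x ∈ H.verts) ∧ (∀ h ∈ H.verts, ∃ x ∈ D, f x = h) ∧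
    AbsMinorModel G H (fun h => {x | x ∈ D ∧ f x = h})




namespace FareyAux

abbrev V := Option (List ℕ)

def Desc (z : List ℕ) : Set V := {v | ∃ l, v = some l ∧ z <:+ l}

lemma crossing {a : List ℕ} {n : ℕ} {x y : V}
    (hadj : TAleph0Star.Adj x y) (hx : x ∈ Desc (n :: a)) (hy : y ∉ Desc (n :: a))
    (hy0 : y ≠ none) : x = some (n :: a) ∧ y = some a := by
  obtain ⟨lx, rfl, hsuf⟩ := hx
  obtain ⟨ly, rfl⟩ := Option.ne_none_iff_exists'.mp hy0
  have hadj' : (∃ m, lx = m :: ly) ∨ (∃ m, ly = m :: lx) := hadj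
  rcases hadj' with ⟨m, rfl⟩ | ⟨m, rfl⟩
  · rcases List.suffix_cons_iff.mp hsuf with h | h
    · cases h; exact ⟨rfl, rfl⟩
    · exact absurd ⟨ly, rfl, h⟩ hy
  · exact absurd ⟨m :: lx, rfl, hsuf.trans (List.suffix_cons m lx)⟩ hy

lemma connected_cross {D : Set V} (hD : (TAleph0Star.induce D).Connected)
    (hnone : none ∉ D) {a : List ℕ} {n : ℕ} {x y : V}
    (hx : x ∈ D) (hxS : x ∈ Desc (n :: a)) (hy : y ∈ D) (hyS : y ∉ Desc (n :: a)) :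
    some (n :: a) ∈ D ∧ some a ∈ D := by
  obtain ⟨p⟩ := hD.preconnected ⟨x, hx⟩ ⟨y, hy⟩
  obtain ⟨d, _, h1, h2⟩ := p.exists_boundary_dart {v : D | v.1 ∈ Desc (n :: a)} hxS hyS
  have hadj : TAleph0Star.Adj (d.toProd.1 : V) (d.toProd.2 : V) := d.adj
  have h2' : (d.toProd.2 : V) ≠ none := fun h => hnone (h ▸ d.toProd.2.2)
  obtain ⟨e1, e2⟩ := crossing hadj h1 h2 h2'
  exact ⟨e1 ▸ d.toProd.1.2, e2 ▸ d.toProd.2.2⟩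

lemma no_triangle_aux {A B C : Set V} (la : List ℕ) (n : ℕ)
    (hA : (TAleph0Star.induce A).Connected) (hB : (TAleph0Star.induce B).Connected)
    (hC : (TAleph0Star.induce C).Connected)
    (hnA : none ∉ A) (hnB : none ∉ B) (hnC : none ∉ C)
    (dAB : Disjoint A B) (dAC : Disjoint A C) (dBC : Disjoint B C)
    (haA : some la ∈ A) (hbB : some (n :: la) ∈ B)
    (eAC : ∃ a ∈ A, ∃ c ∈ C, TAleph0Star.Adj a c)
    (eBC : ∃ b ∈ B, ∃ c ∈ C, TAleph0Star.Adj b c) : False := by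
  have hbS : (some (n :: la) : V) ∈ Desc (n :: la) := ⟨n :: la, rfl, List.suffix_refl _⟩
  have haS : (some la : V) ∉ Desc (n :: la) := by
    rintro ⟨l, hl, hsuf⟩
    injection hl with hl; subst hl
    have := hsuf.length_le
    simp at this
  by_cases hCc : ∃ c ∈ C, c ∈ Desc (n :: la)
  · obtain ⟨c0, hc0C, hc0S⟩ := hCc
    obtain ⟨a', ha'A, c', hc'C, hadj⟩ := eAC
    have hAout : ∀ v ∈ A, v ∉ Desc (n :: la) := by
      intro v hv hvS
      have := (connected_cross hA hnA hv hvS haA haS).1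
      exact Set.disjoint_left.mp dAB this hbB
    have hCin : ∀ v ∈ C, v ∈ Desc (n :: la) := by
      intro v hv
      by_contra hvS
      have := (connected_cross hC hnC hc0C hc0S hv hvS).1
      exact Set.disjoint_left.mp dBC hbB this
    have ha'0 : a' ≠ none := fun h => hnA (h ▸ ha'A)
    obtain ⟨e1, _⟩ := crossing hadj.symm (hCin c' hc'C) (hAout a' ha'A) ha'0
    exact Set.disjoint_left.mp dBC (e1 ▸ hbB) hc'C
  · push_neg at hCc
    obtain ⟨b', hb'B, c', hc'C, hadj⟩ := eBC
    have hBin : ∀ v ∈ B, v ∈ Desc (n :: la) := by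
      intro v hv
      by_contra hvS
      have := (connected_cross hB hnB hbB hbS hv hvS).2
      exact Set.disjoint_left.mp dAB haA this
    have hc'0 : c' ≠ none := fun h => hnC (h ▸ hc'C)
    obtain ⟨_, e2⟩ := crossing hadj (hBin b' hb'B) (hCc c' hc'C) hc'0
    exact Set.disjoint_left.mp dAC haA (e2 ▸ hc'C)

lemma no_triangle {A B C : Set V}
    (hA : (TAleph0Star.induce A).Connected) (hB : (TAleph0Star.induce B).Connected)
    (hC : (TAleph0Star.induce C).Connected)
    (hnA : none ∉ A) (hnB : none ∉ B) (hnC : none ∉ C)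
    (dAB : Disjoint A B) (dAC : Disjoint A C) (dBC : Disjoint B C)
    (eAB : ∃ a ∈ A, ∃ b ∈ B, TAleph0Star.Adj a b)
    (eAC : ∃ a ∈ A, ∃ c ∈ C, TAleph0Star.Adj a c)
    (eBC : ∃ b ∈ B, ∃ c ∈ C, TAleph0Star.Adj b c) : False := by
  obtain ⟨a, haA, b, hbB, hadj⟩ := eAB
  have ha0 : a ≠ none := fun h => hnA (h ▸ haA)
  have hb0 : b ≠ none := fun h => hnB (h ▸ hbB)
  obtain ⟨la, rfl⟩ := Option.ne_none_iff_exists'.mp ha0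
  obtain ⟨lb, rfl⟩ := Option.ne_none_iff_exists'.mp hb0
  have hadj' : (∃ m, la = m :: lb) ∨ (∃ m, lb = m :: la) := hadj
  rcases hadj' with ⟨m, rfl⟩ | ⟨m, rfl⟩
  · exact no_triangle_aux lb m hB hA hC hnB hnA hnC dAB.symm dBC dAC hbB haA eBC eAC
  · exact no_triangle_aux la m hA hB hC hnA hnB hnC dAB dAC dBC haA hbB eAC eBC

/-- explicit rationals with definitional num/den -/
def r0 : ℚ := ⟨0, 1, by decide, by decide⟩
def r1 : ℚ := ⟨1, 1, by decide, by decide⟩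
def rh : ℚ := ⟨1, 2, by decide, by decide⟩
def r2 : ℚ := ⟨2, 1, by decide, by decide⟩
def r3 : ℚ := ⟨3, 1, by decide, by decide⟩
def rh2 : ℚ := ⟨5, 2, by decide, by decide⟩

lemma adjF (p q : ℚ) (h : (p.num * (q.den : ℤ) - q.num * (p.den : ℤ)).natAbs = 1) :
    fareyGraph.Adj (some p) (some q) := h

end FareyAux

/-- **Lemma 3.1.** The Farey graph is not a minor of `T_ℵ₀ * t`. -/
theorem farey_not_minor_of_TAleph0Star : ¬ HasMinor TAleph0Star fareyGraph := by
  rintro ⟨br, hne, hconn, hdisj, hedge⟩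
  open FareyAux in
  have key : ∀ u v w : ℚ, u ≠ v → u ≠ w → v ≠ w →
      fareyGraph.Adj (some u) (some v) → fareyGraph.Adj (some u) (some w) →
      fareyGraph.Adj (some v) (some w) →
      none ∉ br (some u) → none ∉ br (some v) → none ∉ br (some w) → False := by
    intro u v w huv huw hvw auv auw avw hu hv hw
    exact FareyAux.no_triangle (hconn _) (hconn _) (hconn _) hu hv hw
      (hdisj _ _ (by simpa using huv)) (hdisj _ _ (by simpa using huw))
      (hdisj _ _ (by simpa using hvw))
      (hedge _ _ auv) (hedge _ _ auw) (hedge _ _ avw)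
  have hdn : ∀ p q : ℚ, p ≠ q → none ∈ br (some p) → none ∉ br (some q) := by
    intro p q hpq hp hq
    exact Set.disjoint_left.mp (hdisj _ _ (by simpa using hpq)) hp hq
  have a01 : fareyGraph.Adj (some FareyAux.r0) (some FareyAux.r1) := FareyAux.adjF _ _ (by decide)
  have a0h : fareyGraph.Adj (some FareyAux.r0) (some FareyAux.rh) := FareyAux.adjF _ _ (by decide)
  have a1h : fareyGraph.Adj (some FareyAux.r1) (some FareyAux.rh) := FareyAux.adjF _ _ (by decide)
  have a23 : fareyGraph.Adj (some FareyAux.r2) (some FareyAux.r3) := FareyAux.adjF _ _ (by decide)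
  have a2h : fareyGraph.Adj (some FareyAux.r2) (some FareyAux.rh2) := FareyAux.adjF _ _ (by decide)
  have a3h : fareyGraph.Adj (some FareyAux.r3) (some FareyAux.rh2) := FareyAux.adjF _ _ (by decide)
  by_cases h : none ∈ br (some FareyAux.r0) ∨ none ∈ br (some FareyAux.r1) ∨
      none ∈ br (some FareyAux.rh)
  · rcases h with h | h | h
    · exact key FareyAux.r2 FareyAux.r3 FareyAux.rh2 (by decide) (by decide) (by decide)
        a23 a2h a3h (hdn _ _ (by decide) h) (hdn _ _ (by decide) h) (hdn _ _ (by decide) h)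
    · exact key FareyAux.r2 FareyAux.r3 FareyAux.rh2 (by decide) (by decide) (by decide)
        a23 a2h a3h (hdn _ _ (by decide) h) (hdn _ _ (by decide) h) (hdn _ _ (by decide) h)
    · exact key FareyAux.r2 FareyAux.r3 FareyAux.rh2 (by decide) (by decide) (by decide)
        a23 a2h a3h (hdn _ _ (by decide) h) (hdn _ _ (by decide) h) (hdn _ _ (by decide) h)
  · push_neg at h
    exact key FareyAux.r0 FareyAux.r1 FareyAux.rh (by decide) (by decide) (by decide)
      a01 a0h a1h h.1 h.2.1 h.2.2
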